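/- arXiv:2603.03748 — 2 statements merged into one kernel-verified Lean document; each statement's English description precedes it below -/
import Mathlib

section
/- Let K be a positive natural number and α : Fin K → ℝ with α_k > 0 for all k, and set S = ∑_k α_k. Then ∑_k negMulLog(α_k / S) ≥ ∑_k (α_k / S) · (ψ(S + 1) − ψ(α_k + 1)). That is, for a Dirichlet posterior with parameters α, the total uncertainty (entropy of the mean probability vector α/S) is at least the aleatoric uncertainty given by the closed-form digamma expression, so the epistemic uncertainty H_epistemic = H_total − H_aleatoric is nonnegative. -/
/-!
Term by term it suffices that `ψ(b + 1) - ψ(a + 1) ≤ log b - log a` for `0 < a ≤ b`, i.e. that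
`φ(x) = ψ(x + 1) - log x` is antitone on `(0, ∞)`. By `ψ(x + 1) = ψ(x) + 1/x` the first difference
`φ(x) - φ(x + 1) = log (x + 1) - log x - 1/(x + 1)` is antitone, and log-convexity of `Γ` squeezes
`log x ≤ ψ(x + 1) ≤ log (x + 1)`, so `φ → 0` at infinity. Telescoping, `φ(a) - φ(b)` is a limit of
sums of nonnegative terms `(φ(a + k) - φ(a + k + 1)) - (φ(b + k) - φ(b + k + 1))`.
-/

/-- The digamma function: the logarithmic derivative of the Gamma function. -/
noncomputable def digamma (x : ℝ) : ℝ :=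
  deriv (fun t => Real.log (Real.Gamma t)) x

open Real Filter Set Topology

theorem sum_range_sub_shift (f : ℝ → ℝ) (x : ℝ) (n : ℕ) :
    ∑ k ∈ Finset.range n, (f (x + k) - f (x + k + 1)) = f x - f (x + n) := by
  simpa [add_assoc] using Finset.sum_range_sub' (fun k : ℕ => f (x + k)) n

theorem antitoneOn_of_tendsto_of_antitoneOn_sub_add_one {f : ℝ → ℝ} {c l : ℝ}
    (hf : Tendsto f atTop (𝓝 l)) (hg : AntitoneOn (fun x => f x - f (x + 1)) (Ioi c)) :
    AntitoneOn f (Ioi c) := by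
  intro a ha b hb hab
  have hshift : ∀ x : ℝ, Tendsto (fun n : ℕ => f (x + n)) atTop (𝓝 l) := fun x =>
    hf.comp (tendsto_atTop_add_const_left _ x tendsto_natCast_atTop_atTop)
  have hlim : Tendsto (fun n : ℕ => (f a - f (a + n)) - (f b - f (b + n))) atTop
      (𝓝 ((f a - l) - (f b - l))) :=
    ((hshift a).const_sub _).sub ((hshift b).const_sub _)
  have hnonneg : ∀ n : ℕ, 0 ≤ (f a - f (a + n)) - (f b - f (b + n)) := by
    intro n
    rw [← sum_range_sub_shift, ← sum_range_sub_shift, ← Finset.sum_sub_distrib]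
    refine Finset.sum_nonneg fun k _ => sub_nonneg.2 <| hg ?_ ?_ (by linarith)
    · exact lt_add_of_lt_of_nonneg ha (Nat.cast_nonneg (α := ℝ) k)
    · exact lt_add_of_lt_of_nonneg hb (Nat.cast_nonneg (α := ℝ) k)
  linarith [ge_of_tendsto' hlim hnonneg]

theorem differentiableAt_log_Gamma {x : ℝ} (hx : 0 < x) :
    DifferentiableAt ℝ (fun t => log (Gamma t)) x :=
  (differentiableAt_Gamma fun m => by linarith [m.cast_nonneg (α := ℝ)]).log
    (Gamma_pos_of_pos hx).ne'

theorem digamma_add_one {x : ℝ} (hx : 0 < x) : digamma (x + 1) = digamma x + x⁻¹ := by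
  have hshift : (fun t => log (Gamma (t + 1))) =ᶠ[𝓝 x] fun t => log (Gamma t) + log t := by
    filter_upwards [Ioi_mem_nhds hx] with t (ht : 0 < t)
    rw [Gamma_add_one ht.ne', log_mul ht.ne' (Gamma_pos_of_pos ht).ne', add_comm]
  calc digamma (x + 1) = deriv (fun t => log (Gamma (t + 1))) x :=
        (deriv_comp_add_const _ 1 x).symm
    _ = digamma x + x⁻¹ := by
        rw [hshift.deriv_eq, deriv_fun_add (differentiableAt_log_Gamma hx)
          (differentiableAt_log hx.ne'), deriv_log]
        rfl

theorem slope_log_Gamma_add_one {x : ℝ} (hx : 0 < x) :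
    slope (log ∘ Gamma) x (x + 1) = log x := by
  rw [slope_def_field, Function.comp_apply, Function.comp_apply, Gamma_add_one hx.ne',
    log_mul hx.ne' (Gamma_pos_of_pos hx).ne']
  ring

theorem digamma_le_log {x : ℝ} (hx : 0 < x) : digamma x ≤ log x :=
  slope_log_Gamma_add_one hx ▸ convexOn_log_Gamma.deriv_le_slope hx
    (by simp only [mem_Ioi]; linarith) (lt_add_one x) (differentiableAt_log_Gamma hx)

theorem log_le_digamma_add_one {x : ℝ} (hx : 0 < x) : log x ≤ digamma (x + 1) :=
  slope_log_Gamma_add_one hx ▸ convexOn_log_Gamma.slope_le_deriv hx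
    (by simp only [mem_Ioi]; linarith) (lt_add_one x) (differentiableAt_log_Gamma (by linarith))

theorem tendsto_digamma_add_one_sub_log :
    Tendsto (fun x => digamma (x + 1) - log x) atTop (𝓝 0) := by
  refine tendsto_of_tendsto_of_tendsto_of_le_of_le' tendsto_const_nhds
    (tendsto_log_comp_add_sub_log 1) ?_ ?_ <;>
    filter_upwards [eventually_gt_atTop 0] with x hx
  · exact sub_nonneg.2 (log_le_digamma_add_one hx)
  · exact sub_le_sub_right (digamma_le_log (by linarith)) _

theorem antitoneOn_log_add_one_sub_log_sub_inv :
    AntitoneOn (fun t => log (t + 1) - log t - (t + 1)⁻¹) (Ioi 0) := by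
  have hderiv : ∀ t ∈ Ioi (0 : ℝ), HasDerivAt (fun t => log (t + 1) - log t - (t + 1)⁻¹)
      (-(t * (t + 1) ^ 2)⁻¹) t := by
    intro t (ht : 0 < t)
    have hshift : HasDerivAt (fun t : ℝ => t + 1) 1 t := (hasDerivAt_id t).add_const 1
    refine (((hshift.log (by positivity)).fun_sub (hasDerivAt_log ht.ne')).fun_sub
      (hshift.fun_inv (by positivity))).congr_deriv ?_
    field_simp
    ring
  refine antitoneOn_of_hasDerivWithinAt_nonpos (f' := fun t => -(t * (t + 1) ^ 2)⁻¹)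
    (convex_Ioi 0)
    (fun t ht => (hderiv t ht).continuousAt.continuousWithinAt) ?_ ?_ <;>
    rw [interior_Ioi]
  · exact fun t ht => (hderiv t ht).hasDerivWithinAt
  · exact fun t (ht : 0 < t) => neg_nonpos.2 (by positivity)

theorem antitoneOn_digamma_add_one_sub_log :
    AntitoneOn (fun x => digamma (x + 1) - log x) (Ioi 0) := by
  refine antitoneOn_of_tendsto_of_antitoneOn_sub_add_one tendsto_digamma_add_one_sub_log
    (antitoneOn_log_add_one_sub_log_sub_inv.congr fun x (hx : 0 < x) => ?_)
  simp only [digamma_add_one (by linarith : 0 < x + 1)]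
  ring

theorem mul_digamma_add_one_sub_le_negMulLog {a b : ℝ} (ha : 0 < a) (hab : a ≤ b) :
    a / b * (digamma (b + 1) - digamma (a + 1)) ≤ negMulLog (a / b) := by
  have hb : 0 < b := ha.trans_le hab
  rw [negMulLog, log_div ha.ne' hb.ne', neg_mul, ← mul_neg, neg_sub]
  have h : digamma (b + 1) - log b ≤ digamma (a + 1) - log a :=
    antitoneOn_digamma_add_one_sub_log ha hb hab
  exact mul_le_mul_of_nonneg_left (by linarith) (by positivity)

theorem total_ge_aleatoric_general (K : ℕ) (α : Fin K → ℝ)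
    (hα : ∀ k, 0 < α k) :
    ∑ k, (α k / ∑ j, α j) * (digamma ((∑ j, α j) + 1) - digamma (α k + 1)) ≤
      ∑ k, Real.negMulLog (α k / ∑ j, α j) :=
  Finset.sum_le_sum fun k _ => mul_digamma_add_one_sub_le_negMulLog (hα k)
    (Finset.single_le_sum (fun j _ => (hα j).le) (Finset.mem_univ k))

/-- **Total uncertainty dominates aleatoric uncertainty (Dirichlet posterior).**
For a Dirichlet posterior with parameters `α` (all positive) and `S = ∑ k, α k`, the
total uncertainty `H_total = ∑ k, negMulLog (α k / S)` (entropy of the mean probability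
vector) is at least the closed-form aleatoric uncertainty
`H_aleatoric = ∑ k, (α k / S) * (ψ(S+1) − ψ(α k + 1))`; hence the epistemic uncertainty
`H_total − H_aleatoric` is nonnegative. -/
theorem total_ge_aleatoric (K : ℕ) (hK : 0 < K) (α : Fin K → ℝ)
    (hα : ∀ k, 0 < α k) :
    ∑ k, (α k / ∑ j, α j) * (digamma ((∑ j, α j) + 1) - digamma (α k + 1)) ≤
      ∑ k, Real.negMulLog (α k / ∑ j, α j) :=
  total_ge_aleatoric_general K α hα
end

section
/- For all real numbers a > 0 and b > 0, the integral ∫_0^1 x^{a−1} · (1−x)^{b−1} · log(x) dx equals (Γ(a)·Γ(b)/Γ(a+b)) · (ψ(a) − ψ(a+b)), where Γ is the real Gamma function. (Differentiated Beta-integral identity underlying the analytical aleatoric uncertainty formula.) -/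
/-! Differentiate `t ↦ B(t, b) = ∫₀¹ x^(t-1) (1-x)^(b-1) dx` at `t = a` in two ways: under the
integral sign, which produces the factor `log x`, and through `B(t, b) = Γ(t)Γ(b)/Γ(t+b)`, whose
logarithmic derivative is `ψ(t) - ψ(t+b)`. Differentiation under the integral is justified near
`a` by `|log x| ≤ x^(-a/4) / (a/4)` on `(0, 1]`, so that for `t > a/2` the differentiated integrand
is dominated by the integrable `x^(a/4-1) (1-x)^(b-1) / (a/4)`. -/

open MeasureTheory Real Set Filter Topology Interval

lemma ofReal_cpow_mul_one_sub_cpow (s t : ℝ) {x : ℝ} (hx₀ : 0 ≤ x) (hx₁ : x ≤ 1) :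
    (x : ℂ) ^ ((s : ℂ) - 1) * (1 - (x : ℂ)) ^ ((t : ℂ) - 1) =
      ((x ^ (s - 1) * (1 - x) ^ (t - 1) : ℝ) : ℂ) := by
  rw [Complex.ofReal_mul, Complex.ofReal_cpow hx₀, Complex.ofReal_cpow (by linarith)]
  push_cast
  ring_nf

lemma intervalIntegrable_rpow_mul_one_sub_rpow {s t : ℝ} (hs : 0 < s) (ht : 0 < t) :
    IntervalIntegrable (fun x : ℝ => x ^ (s - 1) * (1 - x) ^ (t - 1)) volume 0 1 := by
  have hB := Complex.betaIntegral_convergent (u := s) (v := t) (by simpa) (by simpa)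
  rw [intervalIntegrable_iff, uIoc_of_le zero_le_one] at hB ⊢
  refine hB.re.congr ?_
  filter_upwards [ae_restrict_mem measurableSet_Ioc] with x hx
  rw [ofReal_cpow_mul_one_sub_cpow s t hx.1.le hx.2]
  exact Complex.ofReal_re _

lemma integral_rpow_mul_one_sub_rpow {s t : ℝ} (hs : 0 < s) (ht : 0 < t) :
    ∫ x in (0:ℝ)..1, x ^ (s - 1) * (1 - x) ^ (t - 1) = Gamma s * Gamma t / Gamma (s + t) := by
  have hB : Complex.betaIntegral s t =
      ((∫ x in (0:ℝ)..1, x ^ (s - 1) * (1 - x) ^ (t - 1) : ℝ) : ℂ) := by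
    rw [Complex.betaIntegral, ← intervalIntegral.integral_ofReal]
    refine intervalIntegral.integral_congr fun x hx => ?_
    rw [uIcc_of_le zero_le_one] at hx
    exact ofReal_cpow_mul_one_sub_cpow s t hx.1 hx.2
  have hΓ := Complex.Gamma_mul_Gamma_eq_betaIntegral (s := s) (t := t) (by simpa) (by simpa)
  rw [hB, ← Complex.ofReal_add, Complex.Gamma_ofReal, Complex.Gamma_ofReal, Complex.Gamma_ofReal,
    ← Complex.ofReal_mul, ← Complex.ofReal_mul, Complex.ofReal_inj] at hΓ
  rw [eq_div_iff (Gamma_pos_of_pos (add_pos hs ht)).ne', mul_comm, hΓ]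

lemma differentiableAt_Gamma_of_pos {x : ℝ} (hx : 0 < x) : DifferentiableAt ℝ Gamma x :=
  differentiableAt_Gamma fun m hm => by linarith [hm ▸ hx, m.cast_nonneg (α := ℝ)]

lemma digamma_eq_deriv_Gamma_div {x : ℝ} (hx : 0 < x) : digamma x = deriv Gamma x / Gamma x := by
  rw [digamma, deriv.log (differentiableAt_Gamma_of_pos hx) (Gamma_pos_of_pos hx).ne']

lemma hasDerivAt_Gamma_mul_Gamma_div_Gamma_add {a b : ℝ} (ha : 0 < a) (hab : 0 < a + b) :
    HasDerivAt (fun t => Gamma t * Gamma b / Gamma (t + b))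
      (Gamma a * Gamma b / Gamma (a + b) * (digamma a - digamma (a + b))) a := by
  have hΓa := (differentiableAt_Gamma_of_pos ha).hasDerivAt
  have hΓab := ((differentiableAt_Gamma_of_pos hab).hasDerivAt).comp_add_const a b
  refine ((hΓa.mul_const (Gamma b)).div hΓab (Gamma_pos_of_pos hab).ne').congr_deriv ?_
  rw [digamma_eq_deriv_Gamma_div ha, digamma_eq_deriv_Gamma_div hab]
  field_simp [(Gamma_pos_of_pos ha).ne']

lemma abs_log_le_rpow_neg_div {x ε : ℝ} (hx₀ : 0 < x) (hx₁ : x ≤ 1) (hε : 0 < ε) :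
    |log x| ≤ x ^ (-ε) / ε := by
  have h := abs_log_mul_self_rpow_lt x ε hx₀ hx₁ hε
  rw [abs_mul, abs_of_pos (rpow_pos_of_pos hx₀ ε), lt_div_iff₀ hε] at h
  rw [le_div_iff₀ hε, rpow_neg hx₀.le, ← one_div, le_div_iff₀ (rpow_pos_of_pos hx₀ ε)]
  linarith

lemma abs_rpow_mul_log_le {x s t ε : ℝ} (hx₀ : 0 < x) (hx₁ : x ≤ 1) (hst : s ≤ t) (hε : 0 < ε) :
    |x ^ t * log x| ≤ x ^ (s - ε) / ε := calc
  |x ^ t * log x| = x ^ t * |log x| := by rw [abs_mul, abs_of_pos (rpow_pos_of_pos hx₀ t)]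
  _ ≤ x ^ s * (x ^ (-ε) / ε) := mul_le_mul (rpow_le_rpow_of_exponent_ge hx₀ hx₁ hst)
      (abs_log_le_rpow_neg_div hx₀ hx₁ hε) (abs_nonneg _) (rpow_nonneg hx₀.le s)
  _ = x ^ (s - ε) / ε := by rw [sub_eq_add_neg, rpow_add hx₀, mul_div_assoc]

lemma hasDerivAt_integral_rpow_mul_one_sub_rpow {a b : ℝ} (ha : 0 < a) (hb : 0 < b) :
    HasDerivAt (fun t => ∫ x in (0:ℝ)..1, x ^ (t - 1) * (1 - x) ^ (b - 1))
      (∫ x in (0:ℝ)..1, x ^ (a - 1) * (1 - x) ^ (b - 1) * log x) a := by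
  have h_bound : ∀ x ∈ Ι (0:ℝ) 1, ∀ t ∈ Ioi (a / 2),
      ‖x ^ (t - 1) * (1 - x) ^ (b - 1) * log x‖ ≤ x ^ (a / 4 - 1) * (1 - x) ^ (b - 1) / (a / 4) := by
    intro x hx t ht
    rw [uIoc_of_le zero_le_one] at hx
    have h := abs_rpow_mul_log_le (t := t - 1) hx.1 hx.2
      (by linarith [mem_Ioi.mp ht] : a / 2 - 1 ≤ t - 1) (by positivity : 0 < a / 4)
    rw [show a / 2 - 1 - a / 4 = a / 4 - 1 by ring] at h
    have h1x : 0 ≤ (1 - x) ^ (b - 1) := rpow_nonneg (by linarith [hx.2]) _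
    rw [norm_eq_abs, mul_right_comm, abs_mul, abs_of_nonneg h1x, mul_div_right_comm]
    gcongr
  have h_diff : ∀ x ∈ Ι (0:ℝ) 1, ∀ t ∈ Ioi (a / 2), HasDerivAt
      (fun t => x ^ (t - 1) * (1 - x) ^ (b - 1)) (x ^ (t - 1) * (1 - x) ^ (b - 1) * log x) t := by
    intro x hx t _
    rw [uIoc_of_le zero_le_one] at hx
    refine ((((hasDerivAt_id t).sub_const 1).const_rpow hx.1).mul_const _).congr_deriv ?_
    simp only [id]
    ring
  exact (intervalIntegral.hasDerivAt_integral_of_dominated_loc_of_deriv_le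
    (Ioi_mem_nhds (half_lt_self ha))
    (Eventually.of_forall fun t => (by fun_prop : Measurable fun x : ℝ =>
      x ^ (t - 1) * (1 - x) ^ (b - 1)).aestronglyMeasurable)
    (intervalIntegrable_rpow_mul_one_sub_rpow ha hb)
    ((by fun_prop : Measurable fun x : ℝ =>
      x ^ (a - 1) * (1 - x) ^ (b - 1) * log x).aestronglyMeasurable)
    (Eventually.of_forall h_bound)
    ((intervalIntegrable_rpow_mul_one_sub_rpow (by positivity) hb).div_const _)
    (Eventually.of_forall h_diff)).2

/-- **Differentiated Beta-integral identity.** For all `a, b > 0`,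
`∫_0^1 x^{a−1} (1−x)^{b−1} log x dx = (Γ(a)Γ(b)/Γ(a+b)) · (ψ(a) − ψ(a+b))`. -/
theorem integral_beta_log (a b : ℝ) (ha : 0 < a) (hb : 0 < b) :
    ∫ x in (0:ℝ)..1, x ^ (a - 1) * (1 - x) ^ (b - 1) * Real.log x =
      (Real.Gamma a * Real.Gamma b / Real.Gamma (a + b)) *
        (digamma a - digamma (a + b)) := by
  have h_beta : (fun t => ∫ x in (0:ℝ)..1, x ^ (t - 1) * (1 - x) ^ (b - 1)) =ᶠ[𝓝 a]
      fun t => Gamma t * Gamma b / Gamma (t + b) :=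
    (eventually_gt_nhds ha).mono fun _ ht => integral_rpow_mul_one_sub_rpow ht hb
  exact ((hasDerivAt_integral_rpow_mul_one_sub_rpow ha hb).congr_of_eventuallyEq
    h_beta.symm).unique
    (hasDerivAt_Gamma_mul_Gamma_div_Gamma_add ha (add_pos ha hb))
end
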